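/- arXiv:2010.11935 — 3 statements merged into one kernel-verified Lean document; each statement's English description precedes it below -/
import Mathlib

section
/- Let K and r be integers with 1 ≤ r < K, and fix a removed node k ∈ Fin K. Consider the following random process (as a composition/bind of PMFs): draw N uniformly from the r-element subsets of Fin K; if k ∉ N, output N; if k ∈ N, draw j uniformly from the complement Finset.univ \ N (which has K − r elements and does not contain k) and output (N \ {k}) ∪ {j}. Then the output distribution is exactly the uniform distribution on the r-element subsets of Fin K that do not contain k; in particular, every such subset has probability 1/C(K−1, r). -/
open Finset

-- inner map value
lemma aux_inner {K r : ℕ} (hr : 1 ≤ r) (k : Fin K)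
    (S N : Finset (Fin K)) (hS : S.card = r) (hkS : k ∉ S)
    (hN : N.card = r) (hkN : k ∈ N) (hne : ((Finset.univ : Finset (Fin K)) \ N).Nonempty) :
    ((PMF.uniformOfFinset ((Finset.univ : Finset (Fin K)) \ N) hne).map
        (fun j => insert j (N.erase k))) S
      = if N.erase k ⊆ S then (((K - r : ℕ)) : ENNReal)⁻¹ else 0 := by
  have hcard : ((Finset.univ : Finset (Fin K)) \ N).card = K - r := by
    rw [card_sdiff_of_subset (subset_univ N), card_univ, Fintype.card_fin, hN]
  have hek : (N.erase k).card = r - 1 := by rw [card_erase_of_mem hkN, hN]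
  rw [PMF.map_apply, tsum_fintype]
  by_cases h : N.erase k ⊆ S
  · -- there is a unique j₀ with insert j₀ (N.erase k) = S
    have hlt : (N.erase k).card < S.card := by omega
    obtain ⟨j₀, hj₀S, hj₀N⟩ := (Finset.ssubset_iff_of_subset h).mp (h.ssubset_of_ne (fun he => by rw [he] at hek; omega))
    have hins : insert j₀ (N.erase k) = S := by
      apply Finset.eq_of_subset_of_card_le
      · exact insert_subset hj₀S h
      · rw [card_insert_of_notMem hj₀N, hek, hS]; omega
    rw [if_pos h]
    rw [Finset.sum_eq_single j₀]
    · rw [if_pos hins.symm, PMF.uniformOfFinset_apply, hcard]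
      have : j₀ ∈ (Finset.univ : Finset (Fin K)) \ N := by
        simp only [mem_sdiff, mem_univ, true_and]
        intro hj₀Nmem
        exact hj₀N (mem_erase.mpr ⟨fun he => hkS (he ▸ hj₀S), hj₀Nmem⟩)
      rw [if_pos this]
    · intro j _ hjne
      rw [if_neg]
      intro hSe
      apply hjne
      have : j₀ ∈ insert j (N.erase k) := hSe ▸ hj₀S
      rcases mem_insert.mp this with h1 | h1
      · exact h1.symm
      · exact absurd h1 hj₀N
    · intro hj; exact absurd (mem_univ j₀) hj
  · rw [if_neg h]
    apply Finset.sum_eq_zero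
    intro j _
    rw [if_neg]
    intro hSe
    exact h (hSe ▸ (subset_insert j (N.erase k)))

lemma aux_count {K r : ℕ} (hr : 1 ≤ r) (hrK : r < K) (k : Fin K)
    (S : Finset (Fin K)) (hS : S.card = r) (hkS : k ∉ S) :
    (((Finset.univ : Finset (Fin K)).powersetCard r).filter
        (fun N => k ∈ N ∧ N.erase k ⊆ S)).card = r := by
  rw [← hS]
  symm
  apply Finset.card_bij (fun j _ => insert k (S.erase j))
  · intro j hj
    have hkSe : k ∉ S.erase j := fun h => hkS (mem_of_mem_erase h)
    simp only [mem_filter, mem_powersetCard_univ]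
    refine ⟨?_, mem_insert_self _ _, ?_⟩
    · rw [card_insert_of_notMem hkSe, card_erase_of_mem hj, hS]; omega
    · rw [erase_insert hkSe]; exact erase_subset _ _
  · intro j₁ hj₁ j₂ hj₂ heq
    have hkS1 : k ∉ S.erase j₁ := fun h => hkS (mem_of_mem_erase h)
    have hkS2 : k ∉ S.erase j₂ := fun h => hkS (mem_of_mem_erase h)
    have he : S.erase j₁ = S.erase j₂ := by
      have := congrArg (Finset.erase · k) heq
      simpa [erase_insert hkS1, erase_insert hkS2] using this
    by_contra hne
    exact (notMem_erase j₁ S) (he ▸ mem_erase.mpr ⟨hne, hj₁⟩)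
  · intro N hN
    simp only [mem_filter, mem_powersetCard_univ] at hN
    obtain ⟨hNcard, hkN, hsub⟩ := hN
    have hek : (N.erase k).card = r - 1 := by rw [card_erase_of_mem hkN, hNcard, hS]
    have hlt : (N.erase k).card < S.card := by omega
    obtain ⟨j, hjS, hjN⟩ := (Finset.ssubset_iff_of_subset hsub).mp
      (hsub.ssubset_of_ne (fun he => by rw [he] at hek; omega))
    refine ⟨j, hjS, ?_⟩
    have h1 : N.erase k = S.erase j := by
      apply Finset.eq_of_subset_of_card_le
      · intro x hx
        exact mem_erase.mpr ⟨fun hxj => hjN (hxj ▸ hx), hsub hx⟩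
      · rw [card_erase_of_mem hjS, hS, hek]
    rw [← h1, insert_erase hkN]

lemma aux_arith {K r : ℕ} (hr : 1 ≤ r) (hrK : r < K) :
    ((K.choose r : ℕ) : ENNReal)⁻¹
      + (r : ENNReal) * (((K.choose r : ℕ) : ENNReal)⁻¹ * (((K - r : ℕ)) : ENNReal)⁻¹)
      = (((K - 1).choose r : ℕ) : ENNReal)⁻¹ := by
  have h1 : K.choose r ≠ 0 := (Nat.choose_pos hrK.le).ne'
  have h2 : (K - 1).choose r ≠ 0 := (Nat.choose_pos (show r ≤ K - 1 by omega)).ne'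
  have h3 : K - r ≠ 0 := by omega
  have key : (K - 1).choose r * K = K.choose r * (K - r) := by
    have := Nat.choose_mul_succ_eq (K - 1) r
    have hK : K - 1 + 1 = K := by omega
    rw [hK] at this
    omega
  have f1 : ((K.choose r : ℕ) : ENNReal)⁻¹ ≠ ⊤ := ENNReal.inv_ne_top.mpr (by exact_mod_cast h1)
  have f3 : (((K - r : ℕ)) : ENNReal)⁻¹ ≠ ⊤ := ENNReal.inv_ne_top.mpr (by exact_mod_cast h3)
  have f4 : (r : ENNReal) * (((K.choose r : ℕ) : ENNReal)⁻¹ * (((K - r : ℕ)) : ENNReal)⁻¹) ≠ ⊤ :=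
    ENNReal.mul_ne_top (ENNReal.natCast_ne_top r) (ENNReal.mul_ne_top f1 f3)
  rw [← ENNReal.toReal_eq_toReal_iff' (ENNReal.add_ne_top.mpr ⟨f1, f4⟩) (ENNReal.inv_ne_top.mpr (by exact_mod_cast h2))]
  rw [ENNReal.toReal_add f1 f4]
  rw [ENNReal.toReal_mul, ENNReal.toReal_mul, ENNReal.toReal_inv, ENNReal.toReal_inv,
    ENNReal.toReal_inv]
  simp only [ENNReal.toReal_natCast]
  have hr1 : (K.choose r : ℝ) ≠ 0 := Nat.cast_ne_zero.mpr h1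
  have hr2 : ((K - 1).choose r : ℝ) ≠ 0 := Nat.cast_ne_zero.mpr h2
  have hr3 : ((K - r : ℕ) : ℝ) ≠ 0 := Nat.cast_ne_zero.mpr h3
  field_simp
  have keyR : ((K - 1).choose r : ℝ) * K = (K.choose r : ℝ) * ((K - r : ℕ) : ℝ) := by
    exact_mod_cast congrArg (Nat.cast : ℕ → ℝ) key
  have hKeq : ((K - r : ℕ) : ℝ) + r = K := by
    have : K - r + r = K := by omega
    exact_mod_cast congrArg (Nat.cast : ℕ → ℝ) this
  nlinarith [keyR, hKeq]

/-- Draw `N` uniformly among the `r`-element subsets of `Fin K`; if `k ∉ N`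
output `N`; if `k ∈ N`, draw `j` uniformly from the complement `univ \ N` and output
`(N \ {k}) ∪ {j}`.  The resulting distribution is the uniform distribution on the
`r`-element subsets of `Fin K` not containing `k`; in particular each such subset has
probability `1 / C(K-1, r)`. -/
theorem stmt2 (K r : ℕ) (hr : 1 ≤ r) (hrK : r < K) (k : Fin K) :
    (PMF.uniformOfFinset (Finset.powersetCard r (Finset.univ : Finset (Fin K)))
        ((Finset.powersetCard_nonempty).mpr (by simpa using hrK.le))).bind
      (fun N =>
        if _ : k ∈ N then
          if hne : ((Finset.univ : Finset (Fin K)) \ N).Nonempty then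
            (PMF.uniformOfFinset ((Finset.univ : Finset (Fin K)) \ N) hne).map
              (fun j => insert j (N.erase k))
          else PMF.pure N
        else PMF.pure N)
    = PMF.uniformOfFinset
        (Finset.powersetCard r ((Finset.univ : Finset (Fin K)).erase k))
        ((Finset.powersetCard_nonempty).mpr
          (by simp [Finset.card_erase_of_mem]; omega))
    ∧ ∀ S ∈ Finset.powersetCard r ((Finset.univ : Finset (Fin K)).erase k),
        PMF.uniformOfFinset
          (Finset.powersetCard r ((Finset.univ : Finset (Fin K)).erase k))
          ((Finset.powersetCard_nonempty).mpr
            (by simp [Finset.card_erase_of_mem]; omega)) S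
          = 1 / (Nat.choose (K - 1) r : ENNReal) := by
  have hcardA : ((Finset.univ : Finset (Fin K)).powersetCard r).card = K.choose r := by
    rw [card_powersetCard, card_univ, Fintype.card_fin]
  have hcardB : (((Finset.univ : Finset (Fin K)).erase k).powersetCard r).card
      = (K - 1).choose r := by
    rw [card_powersetCard, card_erase_of_mem (mem_univ k), card_univ, Fintype.card_fin]
  constructor
  · apply PMF.ext
    intro S
    rw [PMF.bind_apply, tsum_fintype, PMF.uniformOfFinset_apply, hcardB]
    set A := (Finset.univ : Finset (Fin K)).powersetCard r with hA
    have hzero : ∀ N ∈ (Finset.univ : Finset (Finset (Fin K))), N ∉ A →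
        (PMF.uniformOfFinset A ((Finset.powersetCard_nonempty).mpr (by simpa using hrK.le))) N
          * ((if _ : k ∈ N then
              if hne : ((Finset.univ : Finset (Fin K)) \ N).Nonempty then
                (PMF.uniformOfFinset ((Finset.univ : Finset (Fin K)) \ N) hne).map
                  (fun j => insert j (N.erase k))
              else PMF.pure N
            else PMF.pure N) S) = 0 := by
      intro N _ hN
      rw [PMF.uniformOfFinset_apply, if_neg hN, zero_mul]
    rw [← Finset.sum_subset (Finset.subset_univ A) hzero]
    have hterm : ∀ N ∈ A,
        (PMF.uniformOfFinset A ((Finset.powersetCard_nonempty).mpr (by simpa using hrK.le))) N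
          = ((K.choose r : ℕ) : ENNReal)⁻¹ := by
      intro N hN
      rw [PMF.uniformOfFinset_apply, if_pos hN, hcardA]
    -- nonemptiness of complements
    have hne' : ∀ N ∈ A, ((Finset.univ : Finset (Fin K)) \ N).Nonempty := by
      intro N hN
      rw [mem_powersetCard_univ] at hN
      rw [← Finset.card_pos, card_sdiff_of_subset (subset_univ N), card_univ, Fintype.card_fin, hN]
      omega
    by_cases hSmem : S ∈ ((Finset.univ : Finset (Fin K)).erase k).powersetCard r
    · -- main case
      obtain ⟨hSsub, hScard⟩ := mem_powersetCard.mp hSmem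
      have hkS : k ∉ S := fun h => (notMem_erase k _) (hSsub h)
      rw [if_pos hSmem]
      rw [← Finset.sum_filter_add_sum_filter_not A (fun N => k ∈ N)]
      have e1 : ∑ N ∈ A.filter (fun N => k ∈ N),
          (PMF.uniformOfFinset A ((Finset.powersetCard_nonempty).mpr (by simpa using hrK.le))) N
            * ((if _ : k ∈ N then
                if hne : ((Finset.univ : Finset (Fin K)) \ N).Nonempty then
                  (PMF.uniformOfFinset ((Finset.univ : Finset (Fin K)) \ N) hne).map
                    (fun j => insert j (N.erase k))
                else PMF.pure N
              else PMF.pure N) S)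
          = (r : ENNReal) * (((K.choose r : ℕ) : ENNReal)⁻¹ * (((K - r : ℕ)) : ENNReal)⁻¹) := by
        have : ∀ N ∈ A.filter (fun N => k ∈ N),
            (PMF.uniformOfFinset A ((Finset.powersetCard_nonempty).mpr (by simpa using hrK.le))) N
              * ((if _ : k ∈ N then
                  if hne : ((Finset.univ : Finset (Fin K)) \ N).Nonempty then
                    (PMF.uniformOfFinset ((Finset.univ : Finset (Fin K)) \ N) hne).map
                      (fun j => insert j (N.erase k))
                  else PMF.pure N
                else PMF.pure N) S)
            = (if N.erase k ⊆ S then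
                ((K.choose r : ℕ) : ENNReal)⁻¹ * (((K - r : ℕ)) : ENNReal)⁻¹ else 0) := by
          intro N hN
          rw [mem_filter] at hN
          obtain ⟨hNA, hkN⟩ := hN
          rw [dif_pos hkN, dif_pos (hne' N hNA), hterm N hNA,
            aux_inner hr k S N hScard hkS (mem_powersetCard_univ.mp hNA) hkN (hne' N hNA)]
          rw [mul_ite, mul_zero]
        rw [Finset.sum_congr rfl this, ← Finset.sum_filter, Finset.filter_filter,
          Finset.sum_const, aux_count hr hrK k S hScard hkS, nsmul_eq_mul]
      have e2 : ∑ N ∈ A.filter (fun N => ¬ k ∈ N),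
          (PMF.uniformOfFinset A ((Finset.powersetCard_nonempty).mpr (by simpa using hrK.le))) N
            * ((if _ : k ∈ N then
                if hne : ((Finset.univ : Finset (Fin K)) \ N).Nonempty then
                  (PMF.uniformOfFinset ((Finset.univ : Finset (Fin K)) \ N) hne).map
                    (fun j => insert j (N.erase k))
                else PMF.pure N
              else PMF.pure N) S)
          = ((K.choose r : ℕ) : ENNReal)⁻¹ := by
        have : ∀ N ∈ A.filter (fun N => ¬ k ∈ N),
            (PMF.uniformOfFinset A ((Finset.powersetCard_nonempty).mpr (by simpa using hrK.le))) N
              * ((if _ : k ∈ N then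
                  if hne : ((Finset.univ : Finset (Fin K)) \ N).Nonempty then
                    (PMF.uniformOfFinset ((Finset.univ : Finset (Fin K)) \ N) hne).map
                      (fun j => insert j (N.erase k))
                  else PMF.pure N
                else PMF.pure N) S)
            = (if S = N then ((K.choose r : ℕ) : ENNReal)⁻¹ else 0) := by
          intro N hN
          rw [mem_filter] at hN
          obtain ⟨hNA, hkN⟩ := hN
          rw [dif_neg hkN, hterm N hNA, PMF.pure_apply]
          split_ifs with h <;> simp
        rw [Finset.sum_congr rfl this, Finset.sum_ite_eq]
        have hSA : S ∈ A.filter (fun N => ¬ k ∈ N) := by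
          rw [mem_filter, mem_powersetCard_univ]
          exact ⟨hScard, hkS⟩
        rw [if_pos hSA]
      rw [e1, e2, add_comm, aux_arith hr hrK]
    · -- S not an r-subset avoiding k : both sides vanish
      rw [if_neg hSmem]
      apply Finset.sum_eq_zero
      intro N hNA
      have hNcard : N.card = r := mem_powersetCard_univ.mp hNA
      by_cases hkN : k ∈ N
      · rw [dif_pos hkN, dif_pos (hne' N hNA)]
        rw [PMF.map_apply, tsum_fintype]
        rw [Finset.sum_eq_zero, mul_zero]
        intro j _
        by_cases hSe : S = insert j (N.erase k)
        · have hj : j ∉ (Finset.univ : Finset (Fin K)) \ N := by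
            intro hj
            rw [mem_sdiff] at hj
            apply hSmem
            have hjN : j ∉ N.erase k := fun h => hj.2 (mem_of_mem_erase h)
            rw [mem_powersetCard]
            constructor
            · rw [hSe]
              intro x hx
              rcases mem_insert.mp hx with h1 | h1
              · refine mem_erase.mpr ⟨fun he => ?_, mem_univ x⟩
                rw [h1] at he; rw [he] at hj; exact hj.2 hkN
              · exact mem_erase.mpr ⟨(mem_erase.mp h1).1, mem_univ x⟩
            · rw [hSe, card_insert_of_notMem hjN, card_erase_of_mem hkN, hNcard]
              omega
          rw [if_pos hSe, PMF.uniformOfFinset_apply, if_neg hj]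
        · rw [if_neg hSe]
      · rw [dif_neg hkN, PMF.pure_apply]
        by_cases hSe : S = N
        · exfalso
          apply hSmem
          rw [mem_powersetCard]
          refine ⟨?_, hSe ▸ hNcard⟩
          intro x hx
          exact mem_erase.mpr ⟨fun he => hkN (he ▸ hSe ▸ hx), mem_univ x⟩
        · rw [if_neg hSe, mul_zero]

  · intro S hS
    rw [PMF.uniformOfFinset_apply, if_pos hS, hcardB, one_div]
end

section
/- Let K and r be integers with 2 ≤ r < K, and set q = 1/(C(K,r)·(K−r)·(r−1)) and λ = r/K as real numbers. Then the sequence F ↦ r·(F·q + √(2·F·q·(1−q)·log(r−1)))·C(K−1, K−r−1)/(λ·F), indexed by natural numbers F, tends to 1/(r−1) as F → ∞ (Filter.Tendsto along Filter.atTop to the neighborhood of 1/(r−1)). -/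
/-!
Since `K · C(K-1, K-r-1) = C(K, r) · (K-r)`, the linear term `F · q` contributes exactly
`1/(r-1)` after division by `λ F = r F / K`, while the square-root term is `O(√F)` and vanishes
in the limit.
-/

open Filter Topology

theorem Nat.mul_choose_pred_sub_pred {n k : ℕ} (hkn : k < n) :
    n * (n - 1).choose (n - k - 1) = n.choose k * (n - k) := by
  obtain ⟨m, rfl⟩ : ∃ m, n = m + 1 := ⟨n - 1, by omega⟩
  rw [Nat.add_sub_cancel, Nat.sub_right_comm, Nat.add_sub_cancel,
    Nat.choose_symm (Nat.lt_succ_iff.mp hkn), mul_comm, Nat.choose_mul_succ_eq]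

theorem Real.tendsto_mul_add_sqrt_mul_div_atTop (a b : ℝ) :
    Tendsto (fun x : ℝ => (x * a + √(x * b)) / x) atTop (𝓝 a) := by
  have hinv : Tendsto (fun x : ℝ => a + √b * (√x)⁻¹) atTop (𝓝 a) := by
    simpa using (tendsto_inv_atTop_zero.comp Real.tendsto_sqrt_atTop).const_mul √b
      |>.const_add a
  refine hinv.congr' ?_
  filter_upwards [eventually_gt_atTop 0] with x hx
  rw [add_div, mul_div_cancel_left₀ _ hx.ne', Real.sqrt_mul hx.le, mul_comm √x, mul_div_assoc,
    Real.sqrt_div_self]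

/-- For `2 ≤ r < K`, with `q = 1/(C(K,r)·(K−r)·(r−1))` and `λ = r/K`,
the sequence `F ↦ r·(F·q + √(2·F·q·(1−q)·log(r−1)))·C(K−1, K−r−1)/(λ·F)` tends to
`1/(r−1)` as `F → ∞`. -/
theorem stmt6 (K r : ℕ) (hr : 2 ≤ r) (hrK : r < K) :
    Filter.Tendsto
      (fun F : ℕ =>
        (r : ℝ) *
            ((F : ℝ) * (1 / ((Nat.choose K r : ℝ) * ((K : ℝ) - r) * ((r : ℝ) - 1)))
              + Real.sqrt (2 * (F : ℝ)
                  * (1 / ((Nat.choose K r : ℝ) * ((K : ℝ) - r) * ((r : ℝ) - 1)))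
                  * (1 - 1 / ((Nat.choose K r : ℝ) * ((K : ℝ) - r) * ((r : ℝ) - 1)))
                  * Real.log ((r : ℝ) - 1)))
          * (Nat.choose (K - 1) (K - r - 1) : ℝ) / (((r : ℝ) / K) * F))
      Filter.atTop (nhds (1 / ((r : ℝ) - 1))) := by
  set q : ℝ := 1 / ((Nat.choose K r : ℝ) * ((K : ℝ) - r) * ((r : ℝ) - 1))
  set c : ℝ := (Nat.choose (K - 1) (K - r - 1) : ℝ)
  have hK : (K : ℝ) ≠ 0 := by exact_mod_cast (by omega : K ≠ 0)
  have hr0 : (r : ℝ) ≠ 0 := by positivity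
  have hlim : (K : ℝ) * c * q = 1 / ((r : ℝ) - 1) := by
    have hch : (K.choose r : ℝ) ≠ 0 := by exact_mod_cast (Nat.choose_pos hrK.le).ne'
    have hKr : (K : ℝ) - r ≠ 0 := sub_ne_zero.mpr (by exact_mod_cast hrK.ne')
    have hr1 : (r : ℝ) - 1 ≠ 0 := sub_ne_zero.mpr (by exact_mod_cast (by omega : r ≠ 1))
    have hcast := congrArg (Nat.cast (R := ℝ)) (Nat.mul_choose_pred_sub_pred hrK)
    push_cast [Nat.cast_sub hrK.le] at hcast
    simp only [q, c, mul_one_div, hcast]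
    field_simp
  rw [← hlim]
  refine ((Real.tendsto_mul_add_sqrt_mul_div_atTop q (2 * q * (1 - q) * Real.log (r - 1))).comp
    tendsto_natCast_atTop_atTop |>.const_mul (K * c)).congr fun F => ?_
  simp only [Function.comp_apply]
  rw [show 2 * (F : ℝ) * q * (1 - q) * Real.log (r - 1) = F * (2 * q * (1 - q) * Real.log (r - 1))
    by ring]
  field_simp
end

section
/- Let K and r be integers with 1 ≤ r ≤ K. Consider the following random process (as a composition/bind of PMFs) on subsets of Fin (K+1), where the new node is the last index K: draw N uniformly from the r-element subsets of Fin (K+1) that do not contain the new node K; then draw x uniformly from all of Fin (K+1); if x ∈ N, output (N \ {x}) ∪ {K}, and otherwise output N. Then the output distribution is exactly the uniform distribution on all r-element subsets of Fin (K+1); in particular, every r-element subset of Fin (K+1) has probability 1/C(K+1, r). -/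
/-!
Read the two draws as one uniform draw of a pair `(N, x)` and push it forward along
`(N, x) ↦ migrate N x`. A pair lands on a given `r`-set `S` exactly when `x ∉ S` and `N` is `S`
with the new node (if present) replaced by `x`, so every such `S` has a fiber of the same size
`K + 1 - r`. A uniform distribution pushed forward along a map with equal fibers is uniform.
-/

open Finset

namespace PMF

variable {α β γ : Type*} {s : Finset α} (hs : s.Nonempty)

theorem map_uniformOfFinset_apply [DecidableEq β] (f : α → β) (b : β) :
    (uniformOfFinset s hs).map f b = #{a ∈ s | f a = b} / #s := by
  rw [map_apply, tsum_eq_sum (s := s) fun a ha => by simp [ha], div_eq_mul_inv,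
    ← nsmul_eq_mul, ← sum_const, sum_filter]
  refine sum_congr rfl fun a ha => ?_
  simp only [uniformOfFinset_apply_of_mem hs ha, eq_comm]

theorem map_uniformOfFinset_eq_uniformOfFinset [DecidableEq β] {f : α → β} {t : Finset β}
    (ht : t.Nonempty) {m : ℕ} (hf : Set.MapsTo f s t) (hfib : ∀ b ∈ t, #{a ∈ s | f a = b} = m) :
    (uniformOfFinset s hs).map f = uniformOfFinset t ht := by
  have hcard : #s = #t * m := by
    rw [card_eq_sum_card_fiberwise hf, sum_congr rfl hfib, sum_const, smul_eq_mul]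
  have hm : (m : ENNReal) ≠ 0 := by
    have := hs.card_pos
    rw [hcard] at this
    exact_mod_cast (Nat.pos_of_mul_pos_left this).ne'
  ext b
  rw [map_uniformOfFinset_apply, uniformOfFinset_apply]
  split_ifs with hb
  · rw [hfib b hb, hcard, Nat.cast_mul, ← one_div]
    nth_rw 1 [← one_mul (m : ENNReal)]
    exact ENNReal.mul_div_mul_right _ _ hm (ENNReal.natCast_ne_top m)
  · rw [filter_false_of_mem fun a ha (hab : f a = b) => hb (hab ▸ hf ha), card_empty,
      Nat.cast_zero, ENNReal.zero_div]

theorem uniformOfFinset_product_apply {t : Finset β} (ht : t.Nonempty) (a : α) (b : β) :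
    uniformOfFinset (s ×ˢ t) (hs.product ht) (a, b) =
      uniformOfFinset s hs a * uniformOfFinset t ht b := by
  by_cases ha : a ∈ s <;> by_cases hb : b ∈ t <;>
    simp [uniformOfFinset_apply, ha, hb, card_product, ENNReal.mul_inv]

theorem bind_uniformOfFinset_map {t : Finset β} (ht : t.Nonempty) (f : α → β → γ) :
    (uniformOfFinset s hs).bind (fun a => (uniformOfFinset t ht).map (f a)) =
      (uniformOfFinset (s ×ˢ t) (hs.product ht)).map (Function.uncurry f) := by
  ext c
  rw [bind_apply, map_apply, ENNReal.tsum_prod']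
  refine tsum_congr fun a => ?_
  rw [map_apply, ← ENNReal.tsum_mul_left]
  refine tsum_congr fun b => ?_
  rw [uniformOfFinset_product_apply, Function.uncurry_apply_pair, mul_ite, mul_zero]

end PMF

section

variable {α : Type*} [DecidableEq α] (a : α)

/-- `a` is the new node and `N` the nodes storing a bit; drawing box `x ∈ N` moves the bit's copy
from `x` to `a`. -/
def migrate (N : Finset α) (x : α) : Finset α := if x ∈ N then insert a (N.erase x) else N

def migrateSource (S : Finset α) (x : α) : Finset α := if a ∈ S then insert x (S.erase a) else S

variable {a} {N S : Finset α} {x : α}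

theorem card_migrate (hN : a ∉ N) : #(migrate a N x) = #N := by
  unfold migrate
  split_ifs with hx
  · rw [card_insert_of_notMem fun h => hN (mem_of_mem_erase h), card_erase_add_one hx]
  · rfl

theorem notMem_migrateSource (hx : x ∉ S) : a ∉ migrateSource a S x := by
  unfold migrateSource
  split_ifs with ha
  · simp [ne_of_mem_of_not_mem ha hx]
  · exact ha

theorem card_migrateSource (hx : x ∉ S) : #(migrateSource a S x) = #S := by
  unfold migrateSource
  split_ifs with ha
  · rw [card_insert_of_notMem fun h => hx (mem_of_mem_erase h), card_erase_add_one ha]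
  · rfl

theorem migrate_eq_iff (hN : a ∉ N) : migrate a N x = S ↔ x ∉ S ∧ migrateSource a S x = N := by
  unfold migrate migrateSource
  constructor
  · rintro rfl
    by_cases hx : x ∈ N
    · rw [if_pos hx, if_pos (mem_insert_self a _), erase_insert fun h => hN (mem_of_mem_erase h),
        insert_erase hx]
      simp [ne_of_mem_of_not_mem hx hN]
    · rw [if_neg hx, if_neg hN]
      exact ⟨hx, rfl⟩
  · rintro ⟨hx, rfl⟩
    by_cases ha : a ∈ S
    · rw [if_pos ha, if_pos (mem_insert_self x _), erase_insert fun h => hx (mem_of_mem_erase h),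
        insert_erase ha]
    · rw [if_neg ha, if_neg hx]

theorem card_filter_migrate_eq_card_compl [Fintype α] (a : α) (S : Finset α) :
    #{p ∈ powersetCard #S (univ.erase a) ×ˢ univ | Function.uncurry (migrate a) p = S} =
      #Sᶜ := by
  have mem_iff {N : Finset α} : N ∈ powersetCard #S (univ.erase a) ↔ a ∉ N ∧ #N = #S := by
    simp [mem_powersetCard, subset_erase]
  refine card_nbij' Prod.snd (fun x => (migrateSource a S x, x)) ?_ ?_ ?_ fun _ _ => rfl
  · rintro ⟨N, x⟩ hp
    simp only [mem_coe, mem_filter, mem_product, mem_iff] at hp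
    simpa using ((migrate_eq_iff hp.1.1.1).mp hp.2).1
  · intro x hx
    simp only [mem_coe, mem_compl] at hx
    simp only [mem_coe, mem_filter, mem_product, mem_iff, mem_univ, and_true,
      Function.uncurry_apply_pair]
    exact ⟨⟨notMem_migrateSource hx, card_migrateSource hx⟩,
      (migrate_eq_iff (notMem_migrateSource hx)).mpr ⟨hx, rfl⟩⟩
  · rintro ⟨N, x⟩ hp
    simp only [mem_coe, mem_filter, mem_product, mem_iff] at hp
    simp [((migrate_eq_iff hp.1.1.1).mp hp.2).2]

theorem mapsTo_migrate_powersetCard [Fintype α] (a : α) (r : ℕ) :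
    Set.MapsTo (Function.uncurry (migrate a))
      (powersetCard r (univ.erase a) ×ˢ univ : Finset (Finset α × α))
      (powersetCard r univ : Finset (Finset α)) := by
  rintro ⟨N, x⟩ hp
  simp only [mem_coe, mem_product, mem_powersetCard, subset_erase] at hp
  simpa [card_migrate hp.1.1.2] using hp.1.2

end

/-- On `Fin (K+1)` with the new node being the last index `K`:
draw `N` uniformly among the `r`-element subsets not containing the new node, then
draw `x` uniformly from `Fin (K+1)`; if `x ∈ N` output `(N \ {x}) ∪ {K}`, else output `N`.
The resulting distribution is the uniform distribution on all `r`-element subsets of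
`Fin (K+1)`; in particular each such subset has probability `1 / C(K+1, r)`. -/
theorem stmt7 (K r : ℕ) (hrK : r ≤ K) :
    (PMF.uniformOfFinset
        (Finset.powersetCard r ((Finset.univ : Finset (Fin (K + 1))).erase (Fin.last K)))
        ((Finset.powersetCard_nonempty).mpr
          (by simp [Finset.card_erase_of_mem]; omega))).bind
      (fun N =>
        (PMF.uniformOfFinset (Finset.univ : Finset (Fin (K + 1)))
            Finset.univ_nonempty).map
          (fun x => if x ∈ N then insert (Fin.last K) (N.erase x) else N))
    = PMF.uniformOfFinset (Finset.powersetCard r (Finset.univ : Finset (Fin (K + 1))))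
        ((Finset.powersetCard_nonempty).mpr (by simp; omega))
    ∧ ∀ S ∈ Finset.powersetCard r (Finset.univ : Finset (Fin (K + 1))),
        PMF.uniformOfFinset (Finset.powersetCard r (Finset.univ : Finset (Fin (K + 1))))
          ((Finset.powersetCard_nonempty).mpr (by simp; omega)) S
          = 1 / (Nat.choose (K + 1) r : ENNReal) := by
  refine ⟨?_, fun S hS => ?_⟩
  · refine (PMF.bind_uniformOfFinset_map _ _ (migrate (Fin.last K))).trans
      (PMF.map_uniformOfFinset_eq_uniformOfFinset _ _ (m := K + 1 - r)
        (mapsTo_migrate_powersetCard _ r) fun T hT => ?_)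
    rw [← mem_powersetCard_univ.mp hT, card_filter_migrate_eq_card_compl, card_compl,
      Fintype.card_fin]
  · rw [PMF.uniformOfFinset_apply_of_mem _ hS, card_powersetCard, card_univ, Fintype.card_fin,
      one_div]
end
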